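/- If X is a 2N×2N complex matrix with X^♯ = X* and (X - λI)^r v = 0 while (X - λI)^{r-1} v ≠ 0, then (X - conj(λ)I)^r 𝒯v = 0 and (X - conj(λ)I)^{r-1} 𝒯v ≠ 0. -/

import Mathlib

/-! Transposing `X^♯ = Xᴴ` and using `Zᵀ = -Z`, `Z² = -1` gives `X Z = Z X̄`. Since `𝒯 w = -Z w̄`,
`𝒯` intertwines `X - λ` with `X - λ̄`, hence all their powers; as `𝒯` is injective it carries the
Jordan chain of `v` onto one of `𝒯 v` of the same length. -/

open Matrix

noncomputable def Zmat (N : ℕ) : Matrix (Fin N ⊕ Fin N) (Fin N ⊕ Fin N) ℂ :=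
  Matrix.fromBlocks 0 1 (-1) 0

noncomputable def dual {N : ℕ} (X : Matrix (Fin N ⊕ Fin N) (Fin N ⊕ Fin N) ℂ) :
    Matrix (Fin N ⊕ Fin N) (Fin N ⊕ Fin N) ℂ :=
  -(Zmat N) * Xᵀ * (Zmat N)

noncomputable def Tmap {N : ℕ} (ξ : Fin N ⊕ Fin N → ℂ) : Fin N ⊕ Fin N → ℂ :=
  Sum.elim (fun i => -(starRingEnd ℂ) (ξ (Sum.inr i))) (fun i => (starRingEnd ℂ) (ξ (Sum.inl i)))

namespace Matrix

variable {n R : Type*} [DecidableEq n]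

lemma map_sub_smul_one {S : Type*} [Ring R] [Ring S] (f : R →+* S) (X : Matrix n n R) (lam : R) :
    (X - lam • 1).map f = X.map f - f lam • 1 := by
  ext i j
  by_cases hij : i = j <;> simp [hij]

lemma pow_sub_smul_one_mulVec_mulVec_comp [Fintype n] [CommRing R] {f : R →+* R}
    {X C : Matrix n n R} (h : X * C = C * X.map f) (lam : R) (k : ℕ) (w : n → R) :
    (X - f lam • 1) ^ k *ᵥ (C *ᵥ (f ∘ w)) = C *ᵥ (f ∘ ((X - lam • 1) ^ k *ᵥ w)) := by
  have hsemi : SemiconjBy C ((X - lam • 1).map f) (X - f lam • 1) := by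
    rw [SemiconjBy, map_sub_smul_one, Matrix.mul_sub, Matrix.sub_mul, ← h]
    simp
  have hvec : f ∘ ((X - lam • 1) ^ k *ᵥ w) = ((X - lam • 1) ^ k).map f *ᵥ (f ∘ w) :=
    funext (RingHom.map_mulVec f _ w)
  rw [hvec, mulVec_mulVec, mulVec_mulVec, Matrix.map_pow, (hsemi.pow_right k).eq]

end Matrix

section

variable {N : ℕ}

lemma Zmat_transpose : (Zmat N)ᵀ = -Zmat N := by
  simp [Zmat, fromBlocks_transpose, fromBlocks_neg]

lemma Zmat_mul_self : Zmat N * Zmat N = -1 := by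
  simp [Zmat, fromBlocks_multiply, ← fromBlocks_one, fromBlocks_neg]

lemma mul_Zmat_of_dual_eq_conjTranspose {X : Matrix (Fin N ⊕ Fin N) (Fin N ⊕ Fin N) ℂ}
    (hX : dual X = Xᴴ) : X * Zmat N = Zmat N * X.map (starRingEnd ℂ) := by
  have hconj : -(Zmat N * X * Zmat N) = X.map (starRingEnd ℂ) := by
    simpa [dual, transpose_mul, Zmat_transpose, Matrix.mul_assoc] using
      (congrArg transpose hX).trans (conjTranspose_transpose X)
  calc X * Zmat N = -(Zmat N * Zmat N) * (X * Zmat N) := by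
        rw [Zmat_mul_self, neg_neg, Matrix.one_mul]
    _ = Zmat N * -(Zmat N * X * Zmat N) := by noncomm_ring
    _ = Zmat N * X.map (starRingEnd ℂ) := by rw [hconj]

lemma Tmap_eq_neg_Zmat_mulVec (w : Fin N ⊕ Fin N → ℂ) :
    Tmap w = -Zmat N *ᵥ (starRingEnd ℂ ∘ w) := by
  ext (i | i) <;> simp [Tmap, Zmat, neg_mulVec, fromBlocks_mulVec]

lemma Tmap_Tmap (w : Fin N ⊕ Fin N → ℂ) : Tmap (Tmap w) = -w := by
  ext (i | i) <;> simp [Tmap]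

lemma Tmap_zero : Tmap (0 : Fin N ⊕ Fin N → ℂ) = 0 := by
  ext (i | i) <;> simp [Tmap]

lemma Tmap_injective : Function.Injective (Tmap : (Fin N ⊕ Fin N → ℂ) → _) :=
  Function.LeftInverse.injective (g := fun w => -Tmap w) fun w => by simp only [Tmap_Tmap, neg_neg]

lemma Tmap_eq_zero_iff {w : Fin N ⊕ Fin N → ℂ} : Tmap w = 0 ↔ w = 0 :=
  Tmap_injective.eq_iff' Tmap_zero

lemma pow_sub_smul_one_mulVec_Tmap {X : Matrix (Fin N ⊕ Fin N) (Fin N ⊕ Fin N) ℂ}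
    (hX : dual X = Xᴴ) (lam : ℂ) (k : ℕ) (w : Fin N ⊕ Fin N → ℂ) :
    (X - starRingEnd ℂ lam • 1) ^ k *ᵥ Tmap w = Tmap ((X - lam • 1) ^ k *ᵥ w) := by
  have h : X * -Zmat N = -Zmat N * X.map (starRingEnd ℂ) := by
    rw [Matrix.mul_neg, Matrix.neg_mul, mul_Zmat_of_dual_eq_conjTranspose hX]
  simp only [Tmap_eq_neg_Zmat_mulVec]
  exact pow_sub_smul_one_mulVec_mulVec_comp h lam k w

end

theorem generalized_eigenvector_pairing {N : ℕ}
    (X : Matrix (Fin N ⊕ Fin N) (Fin N ⊕ Fin N) ℂ) (hX : dual X = Xᴴ)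
    (lam : ℂ) (r : ℕ) (v : Fin N ⊕ Fin N → ℂ)
    (h1 : ((X - lam • 1) ^ r).mulVec v = 0)
    (h2 : ((X - lam • 1) ^ (r - 1)).mulVec v ≠ 0) :
    ((X - (starRingEnd ℂ) lam • 1) ^ r).mulVec (Tmap v) = 0 ∧
    ((X - (starRingEnd ℂ) lam • 1) ^ (r - 1)).mulVec (Tmap v) ≠ 0 := by
  simp only [pow_sub_smul_one_mulVec_Tmap hX, ne_eq, Tmap_eq_zero_iff]
  exact ⟨h1, h2⟩
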